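/- arXiv:0808.1644 — 2 statements merged into one kernel-verified Lean document; each statement's English description precedes it below -/
import Mathlib

section
/- For x ∈ S³ with A = ψ(x) ∈ SU(2), set z1 = x¹ + i x², z2 = x³ + i x⁴ and γ(t) = e^{it}x (the circle action (z1,z2) ↦ (e^{it}z1, e^{it}z2)). Then the curve t ↦ A_{γ(t)} e₁ A_{γ(t)}⁻¹ in su(2) satisfies W(t) = A_{γ(t)} e₁ A_{γ(t)}⁻¹ - A_x e₁ A_x⁻¹ has norm |W(t)| = 2|sin t| with respect to the inner product ⟨X,Y⟩ = -(1/2)tr(XY). -/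
/-! Rotating `x` along the Hopf fibre multiplies `A_x` on the right by `D = diag(e^{it}, e^{-it})`,
so `W` is the `A_x`-conjugate of `D e₁ D⁻¹ - e₁ = [[0, i(e^{2it} - 1)], [i(e^{-2it} - 1), 0]]`.
Since the trace is conjugation invariant, `-(1/2) tr(W²) = |e^{2it} - 1|² = 4 sin² t`. -/

open Matrix Complex

def psi (z₁ z₂ : ℂ) : Matrix (Fin 2) (Fin 2) ℂ := !![z₁, -star z₂; z₂, star z₁]

lemma psi_mul_left (u z₁ z₂ : ℂ) :
    psi (u * z₁) (u * z₂) = psi z₁ z₂ * diagonal ![u, star u] := by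
  ext i j; fin_cases i <;> fin_cases j <;> simp [psi, mul_comm]

lemma det_psi (z₁ z₂ : ℂ) : (psi z₁ z₂).det = ((‖z₁‖ ^ 2 + ‖z₂‖ ^ 2 : ℝ) : ℂ) := by
  simp [psi, det_fin_two, mul_conj', conj_mul']

lemma conj_mul_sub_conj {n α : Type*} [Fintype n] [DecidableEq n] [CommRing α]
    (A D X : Matrix n n α) :
    A * D * X * (A * D)⁻¹ - A * X * A⁻¹ = A * (D * X * D⁻¹ - X) * A⁻¹ := by
  simp only [Matrix.mul_inv_rev, mul_sub, sub_mul, mul_assoc]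

lemma trace_conj_mul_self {n α : Type*} [Fintype n] [DecidableEq n] [CommRing α]
    {A : Matrix n n α} (hA : IsUnit A.det) (M : Matrix n n α) :
    trace (A * M * A⁻¹ * (A * M * A⁻¹)) = trace (M * M) := by
  have h : A * M * A⁻¹ * (A * M * A⁻¹) = A * (M * M) * A⁻¹ := by
    simp only [mul_assoc, nonsing_inv_mul_cancel_left _ _ hA]
  rw [h, trace_mul_cycle, nonsing_inv_mul _ hA, one_mul]

lemma inv_diagonal_of_norm_eq_one {w : ℂ} (hw : ‖w‖ = 1) :
    (diagonal ![w, star w])⁻¹ = diagonal ![star w, w] := by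
  refine inv_eq_left_inv ?_
  rw [diagonal_mul_diagonal, ← diagonal_one]
  congr 1
  ext i; fin_cases i <;> simp [mul_conj', conj_mul', hw]

lemma trace_sq_diagonal_conj_sub {w : ℂ} (hw : ‖w‖ = 1) (b c : ℂ) :
    let X : Matrix (Fin 2) (Fin 2) ℂ := !![0, b; c, 0]
    let D := diagonal ![w, star w]
    trace ((D * X * D⁻¹ - X) * (D * X * D⁻¹ - X)) = 2 * (‖w ^ 2 - 1‖ : ℂ) ^ 2 * b * c := by
  intro X D
  rw [inv_diagonal_of_norm_eq_one hw, ← mul_conj']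
  simp only [X, D, trace_fin_two, mul_apply, Fin.sum_univ_two, Matrix.sub_apply, of_apply,
    cons_val', cons_val_fin_one, cons_val_zero, cons_val_one, diagonal_apply_eq,
    diagonal_apply_ne _ zero_ne_one, diagonal_apply_ne _ one_ne_zero, zero_mul, mul_zero,
    add_zero, zero_add, sub_self, RCLike.star_def, map_sub, map_pow, map_one]
  ring

/-- For `x ∈ S³` with `A_x = ψ(x) ∈ SU(2)` and `γ(t) = e^{it} x` (the circle
action along the Hopf fibre), the curve `W(t) = A_{γ(t)} e₁ A_{γ(t)}⁻¹ - A_x e₁ A_x⁻¹`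
in `su(2)` has norm `|W(t)| = 2|sin t|` with respect to
`⟨X,Y⟩ = -(1/2) tr(XY)`. -/
theorem stmt_9 (x : Fin 4 → ℝ) (hx : x 0 ^ 2 + x 1 ^ 2 + x 2 ^ 2 + x 3 ^ 2 = 1)
    (t : ℝ) :
    let z1 : ℂ := (x 0 : ℂ) + (x 1 : ℂ) * Complex.I
    let z2 : ℂ := (x 2 : ℂ) + (x 3 : ℂ) * Complex.I
    let e₁ : Matrix (Fin 2) (Fin 2) ℂ := !![0, Complex.I; Complex.I, 0]
    let Aγ : ℝ → Matrix (Fin 2) (Fin 2) ℂ := fun s =>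
      !![Complex.exp (s * Complex.I) * z1, -star (Complex.exp (s * Complex.I) * z2);
         Complex.exp (s * Complex.I) * z2, star (Complex.exp (s * Complex.I) * z1)]
    let W : Matrix (Fin 2) (Fin 2) ℂ :=
      Aγ t * e₁ * (Aγ t)⁻¹ - Aγ 0 * e₁ * (Aγ 0)⁻¹
    Real.sqrt (-(1 / 2 : ℝ) * ((W * W).trace).re) = 2 * |Real.sin t| := by
  intro z1 z2 e₁ Aγ W
  set w := exp (t * I)
  have hw : ‖w‖ = 1 := norm_exp_ofReal_mul_I t
  have hA₀ : Aγ 0 = psi z1 z2 := by simp [Aγ, psi]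
  have hAt : Aγ t = psi z1 z2 * diagonal ![w, star w] := psi_mul_left w z1 z2
  have hdet : IsUnit (psi z1 z2).det := by
    have hz : ‖z1‖ ^ 2 + ‖z2‖ ^ 2 = 1 := by
      simp only [z1, z2, ← normSq_eq_norm_sq, normSq_add_mul_I]; linarith
    simp [det_psi, hz]
  have htrace : (W * W).trace = ((-2 * ‖w ^ 2 - 1‖ ^ 2 : ℝ) : ℂ) := by
    simp only [W, hA₀, hAt, conj_mul_sub_conj, trace_conj_mul_self hdet]
    rw [trace_sq_diagonal_conj_sub hw, mul_assoc _ I, I_mul_I]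
    push_cast; ring
  have hnorm : ‖w ^ 2 - 1‖ = 2 * |Real.sin t| := by
    have hw2 : w ^ 2 = exp (I * (2 * t : ℝ)) := by
      rw [← exp_nat_mul]; push_cast; ring_nf
    rw [hw2, norm_exp_I_mul_ofReal_sub_one]
    simp
  rw [htrace, ofReal_re, hnorm]
  rw [show -(1 / 2 : ℝ) * (-2 * (2 * |Real.sin t|) ^ 2) = (2 * |Real.sin t|) ^ 2 by ring]
  exact Real.sqrt_sq (by positivity)
end

section
/- For A ∈ SU(1,1), conjugation Y ↦ A Y A⁻¹ preserves su(1,1) and preserves the indefinite scalar product ⟨X,Y⟩ = (1/2)tr(XY); the resulting homomorphism ρ : SU(1,1) → O(su(1,1)) ≅ O(1,2) has kernel {I, -I}. -/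
/-!
Writing `J = diag(1, -1)` and `B = A⁻¹`, the relation `Aᵀ J Ā = J` gives both
`Aᵀ J = J B̄` and `J Ā = Bᵀ J`, so `(AXB)ᵀ J + J (AXB)‾ = Bᵀ (Xᵀ J + J X̄) B̄` and conjugation
preserves `su(1,1)`; the trace form is preserved because the trace is invariant under conjugation.
If `A` acts trivially it commutes with `diag(i, -i)` and `[[0, 1], [1, 0]]`, both in `su(1,1)`,
hence is scalar, and `det A = 1` leaves only `±I`.
-/

open Matrix

namespace Matrix

variable {n R : Type*} [Fintype n] [DecidableEq n] [CommRing R]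

lemma conj_mul_conj {A : Matrix n n R} (hdet : IsUnit A.det) (X Y : Matrix n n R) :
    A * X * A⁻¹ * (A * Y * A⁻¹) = A * (X * Y) * A⁻¹ := by
  simp only [← mul_assoc, nonsing_inv_mul_cancel_right _ _ hdet]

lemma conj_eq_iff_commute {A : Matrix n n R} (hdet : IsUnit A.det) (Y : Matrix n n R) :
    A * Y * A⁻¹ = Y ↔ Commute A Y := by
  constructor
  · intro h
    calc A * Y = A * Y * A⁻¹ * A := (nonsing_inv_mul_cancel_right _ _ hdet).symm
      _ = Y * A := by rw [h]
  · intro h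
    rw [h.eq, mul_nonsing_inv_cancel_right _ _ hdet]

lemma scalar_eq_one_or_eq_neg_one_of_det_eq_one [NoZeroDivisors R] {a : R}
    (h : (scalar (Fin 2) a).det = 1) : scalar (Fin 2) a = 1 ∨ scalar (Fin 2) a = -1 := by
  have ha : a = 1 ∨ a = -1 := by simpa [det_fin_two] using h
  rcases ha with rfl | rfl
  exacts [.inl (map_one _), .inr (by rw [map_neg, map_one])]

variable [StarRing R]

/-- `X` lies in the Lie algebra of the group of matrices `A` with `Aᵀ J Ā = J`
(for `J = diag(1, -1)`, traceless such `X` form `su(1,1)`). -/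
def IsSkewFor (J X : Matrix n n R) : Prop :=
  Xᵀ * J + J * X.map (starRingEnd R) = 0

section Conjugation

variable {A J : Matrix n n R}

lemma transpose_mul_eq_mul_map_star_inv (hA : Aᵀ * J * A.map (starRingEnd R) = J)
    (hdet : IsUnit A.det) : Aᵀ * J = J * A⁻¹.map (starRingEnd R) := by
  have : A.map (starRingEnd R) * A⁻¹.map (starRingEnd R) = 1 := by
    rw [← Matrix.map_mul, mul_nonsing_inv A hdet]; simp
  rw [← mul_one (Aᵀ * J), ← this, ← mul_assoc, hA]

lemma mul_map_star_eq_transpose_inv_mul (hA : Aᵀ * J * A.map (starRingEnd R) = J)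
    (hdet : IsUnit A.det) : J * A.map (starRingEnd R) = A⁻¹ᵀ * J := by
  have : A⁻¹ᵀ * Aᵀ = 1 := by rw [← transpose_mul, mul_nonsing_inv A hdet, transpose_one]
  rw [← one_mul (J * _), ← this, mul_assoc, ← mul_assoc Aᵀ, hA]

lemma isSkewFor_conj (hA : Aᵀ * J * A.map (starRingEnd R) = J) (hdet : IsUnit A.det)
    {X : Matrix n n R} (hX : IsSkewFor J X) : IsSkewFor J (A * X * A⁻¹) := by
  have key : (A * X * A⁻¹)ᵀ * J + J * (A * X * A⁻¹).map (starRingEnd R)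
      = A⁻¹ᵀ * (Xᵀ * J + J * X.map (starRingEnd R)) * A⁻¹.map (starRingEnd R) := by
    simp only [transpose_mul, Matrix.map_mul, mul_assoc]
    rw [transpose_mul_eq_mul_map_star_inv hA hdet, ← mul_assoc J (A.map _),
      mul_map_star_eq_transpose_inv_mul hA hdet]
    simp only [add_mul, mul_add, mul_assoc]
  unfold IsSkewFor at hX ⊢
  rw [key, hX, mul_zero, zero_mul]

end Conjugation

section SU11

open Complex

lemma isSkewFor_diag_I : IsSkewFor !![1, 0; 0, -1] !![I, 0; 0, -I] := by
  unfold IsSkewFor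
  ext i j; fin_cases i <;> fin_cases j <;> simp [mul_apply, vecMul, dotProduct, Fin.sum_univ_two]

lemma isSkewFor_antidiag_one : IsSkewFor !![1, 0; 0, -1] !![(0 : ℂ), 1; 1, 0] := by
  unfold IsSkewFor
  ext i j; fin_cases i <;> fin_cases j <;> simp [mul_apply, vecMul, dotProduct, Fin.sum_univ_two]

lemma eq_scalar_of_commute_diag_I_of_commute_antidiag_one {A : Matrix (Fin 2) (Fin 2) ℂ}
    (h₁ : Commute A !![I, 0; 0, -I]) (h₂ : Commute A !![0, 1; 1, 0]) :
    A = scalar (Fin 2) (A 0 0) := by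
  have e₁ := congrFun₂ h₁.eq 0 1
  have e₂ := congrFun₂ h₁.eq 1 0
  have e₃ := congrFun₂ h₂.eq 0 1
  simp only [Fin.isValue, mul_apply, of_apply, cons_val', cons_val_one, cons_val_fin_one,
    Fin.sum_univ_two, cons_val_zero, mul_zero, mul_neg, zero_add, zero_mul, add_zero, neg_mul,
    mul_one, one_mul] at e₁ e₂ e₃
  have h01 : A 0 1 = 0 := by linear_combination (I / 2) * e₁ + A 0 1 * I_sq
  have h10 : A 1 0 = 0 := by linear_combination (-I / 2) * e₂ + A 1 0 * I_sq
  ext i j; fin_cases i <;> fin_cases j <;> simp [h01, h10, e₃]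

lemma conj_eq_self_on_su11_iff {A : Matrix (Fin 2) (Fin 2) ℂ} (hdet : A.det = 1) :
    (∀ Y, IsSkewFor !![1, 0; 0, -1] Y → Y.trace = 0 → A * Y * A⁻¹ = Y) ↔ A = 1 ∨ A = -1 := by
  have hu : IsUnit A.det := hdet ▸ isUnit_one
  constructor
  · intro h
    have hcomm (Y) (hY : IsSkewFor !![1, 0; 0, -1] Y) (htr : Y.trace = 0) : Commute A Y :=
      (conj_eq_iff_commute hu Y).1 (h Y hY htr)
    have hA := eq_scalar_of_commute_diag_I_of_commute_antidiag_one
      (hcomm _ isSkewFor_diag_I (by simp [trace_fin_two]))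
      (hcomm _ isSkewFor_antidiag_one (by simp [trace_fin_two]))
    rw [hA] at hdet ⊢
    exact scalar_eq_one_or_eq_neg_one_of_det_eq_one hdet
  · rintro (rfl | rfl) Y - -
    exacts [(conj_eq_iff_commute hu Y).2 (.one_left Y),
      (conj_eq_iff_commute hu Y).2 (Commute.one_left Y).neg_left]

end SU11

end Matrix

/-- For `A ∈ SU(1,1)`, conjugation `Y ↦ A Y A⁻¹` preserves
`su(1,1) = {X : ᵗX I₁ + I₁ X̄ = 0, tr X = 0}` and preserves the indefinite
scalar product `⟨X,Y⟩ = (1/2) tr(XY)`; the induced homomorphism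
`ρ : SU(1,1) → O(su(1,1)) ≅ O(1,2)` has kernel `{I, -I}`. -/
theorem stmt_17 (A : Matrix (Fin 2) (Fin 2) ℂ)
    (hA : Aᵀ * !![1, 0; 0, -1] * A.map (starRingEnd ℂ) = !![1, 0; 0, -1])
    (hdet : A.det = 1) :
    (∀ X : Matrix (Fin 2) (Fin 2) ℂ,
        Xᵀ * !![1, 0; 0, -1] + !![1, 0; 0, -1] * X.map (starRingEnd ℂ) = 0 →
        X.trace = 0 →
        (A * X * A⁻¹)ᵀ * !![1, 0; 0, -1]
            + !![1, 0; 0, -1] * (A * X * A⁻¹).map (starRingEnd ℂ) = 0 ∧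
          (A * X * A⁻¹).trace = 0) ∧
    (∀ X Y : Matrix (Fin 2) (Fin 2) ℂ,
        (1 / 2 : ℝ) * (((A * X * A⁻¹) * (A * Y * A⁻¹)).trace).re
          = (1 / 2 : ℝ) * ((X * Y).trace).re) ∧
    ((∀ Y : Matrix (Fin 2) (Fin 2) ℂ,
        Yᵀ * !![1, 0; 0, -1] + !![1, 0; 0, -1] * Y.map (starRingEnd ℂ) = 0 →
        Y.trace = 0 → A * Y * A⁻¹ = Y) ↔ (A = 1 ∨ A = -1)) := by
  have hdet' : IsUnit A.det := hdet ▸ isUnit_one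
  have hunit : IsUnit A := (isUnit_iff_isUnit_det A).2 hdet'
  refine ⟨fun X hX htr => ⟨isSkewFor_conj hA hdet' hX, by rw [trace_conj hunit, htr]⟩,
    fun X Y => ?_, conj_eq_self_on_su11_iff hdet⟩
  rw [conj_mul_conj hdet', trace_conj hunit]
end
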